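/- For every n ≥ 1 and every finite set F ⊆ ℝ × ℝ whose convex hull (over ℝ) equals the zonotope Z n = { ∑_{k=0}^{n-1} t k • (1, 2^k) | t : Fin n → ℝ, ∀ k, 0 ≤ t k ∧ t k ≤ 1 }, the cardinality of F is at least 2·n. (This is the formal heart of the paper's claim that no perfect constant pruning strategy exists for the mixed fragment Lola_𝔹/𝓛𝓐: the number of points needed to describe the exact set of possible value combinations of the two relevant variables grows linearly with the number n of unknown inputs, so no representation of size bounded by a constant can be exact for all n.) -/

import Mathlib

/-!
A point of the zonotope `∑ₖ tₖ • gₖ` (`0 ≤ tₖ ≤ 1`) maximising a linear functional `l` must take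
`tₖ = 1` where `l gₖ > 0` and `tₖ = 0` where `l gₖ < 0`; so if `l` vanishes on no generator, the
maximiser `∑_{l gₖ > 0} gₖ` is an exposed, hence extreme, point, and every extreme point of
`convexHull ℝ F` lies in `F`. For `gₖ = (1, 2ᵏ)` the functionals `±((2ʲ - 1/2) x - y)` expose the
sums over `k < j` and over `k ≥ j`, namely `(j, 2ʲ - 1)` and `(n - j, 2ⁿ - 2ʲ)`, and for
`1 ≤ j ≤ n` these are `2n` distinct points.
-/

open Finset

def zonotope {ι E : Type*} [Fintype ι] [AddCommMonoid E] [Module ℝ E] (g : ι → E) : Set E :=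
  { z | ∃ t : ι → ℝ, (∀ k, 0 ≤ t k ∧ t k ≤ 1) ∧ z = ∑ k, t k • g k }

theorem sum_mem_exposedPoints_zonotope {ι E : Type*} [Fintype ι] [AddCommGroup E] [Module ℝ E]
    [TopologicalSpace E] (g : ι → E) (l : StrongDual ℝ E) (s : Finset ι)
    (hpos : ∀ k ∈ s, 0 < l (g k)) (hneg : ∀ k ∉ s, l (g k) < 0) :
    ∑ k ∈ s, g k ∈ (zonotope g).exposedPoints ℝ := by
  classical
  set τ : ι → ℝ := fun k => if k ∈ s then 1 else 0
  have hτ : ∑ k ∈ s, g k = ∑ k, τ k • g k := by simp [τ, ite_smul]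
  have hτ_max : ∀ t : ι → ℝ, (∀ k, 0 ≤ t k ∧ t k ≤ 1) → ∀ k,
      t k * l (g k) ≤ τ k * l (g k) ∧ (t k * l (g k) = τ k * l (g k) → t k = τ k) := by
    intro t ht k
    by_cases hk : k ∈ s
    · have := hpos k hk
      simp only [τ, if_pos hk, one_mul]
      exact ⟨by nlinarith [ht k], fun h => by nlinarith⟩
    · have := hneg k hk
      simp only [τ, if_neg hk, zero_mul]
      exact ⟨by nlinarith [ht k], fun h => by nlinarith⟩
  refine ⟨⟨τ, fun k => ?_, hτ⟩, l, ?_⟩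
  · by_cases hk : k ∈ s <;> simp [τ, hk]
  rintro _ ⟨t, ht, rfl⟩
  simp only [hτ, map_sum, map_smul, smul_eq_mul]
  have hle : ∀ k ∈ univ, t k * l (g k) ≤ τ k * l (g k) := fun k _ => (hτ_max t ht k).1
  refine ⟨sum_le_sum hle, fun hge => ?_⟩
  have heq := (sum_eq_sum_iff_of_le hle).1 (le_antisymm (sum_le_sum hle) hge)
  rw [funext fun k => (hτ_max t ht k).2 (heq k (mem_univ k))]

theorem sum_filter_val_lt_eq_sum_range {M : Type*} [AddCommMonoid M] {n j : ℕ} (hj : j ≤ n)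
    (f : ℕ → M) : ∑ k ∈ univ.filter (fun k : Fin n => (k : ℕ) < j), f k = ∑ k ∈ range j, f k := by
  rw [sum_filter, Fin.sum_univ_eq_sum_range (fun k => if k < j then f k else 0), ← sum_filter]
  congr 1
  ext k
  simp only [mem_filter, mem_range]
  omega

def unitPowTwo (k : ℕ) : ℝ × ℝ := (1, 2 ^ k)

def lowerVertex (j : ℕ) : ℝ × ℝ := (j, 2 ^ j - 1)

def upperVertex (n j : ℕ) : ℝ × ℝ := (n - j, 2 ^ n - 2 ^ j)

theorem sum_range_unitPowTwo (j : ℕ) : ∑ k ∈ range j, unitPowTwo k = lowerVertex j := by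
  induction j with
  | zero => ext <;> simp [lowerVertex]
  | succ j ih =>
    rw [sum_range_succ, ih]
    ext <;> simp [lowerVertex, unitPowTwo, pow_succ]
    ring

noncomputable def prefixFunctional (j : ℕ) : StrongDual ℝ (ℝ × ℝ) :=
  (2 ^ j - 1 / 2 : ℝ) • ContinuousLinearMap.fst ℝ ℝ ℝ - ContinuousLinearMap.snd ℝ ℝ ℝ

theorem prefixFunctional_unitPowTwo_pos {j k : ℕ} (hk : k < j) :
    0 < prefixFunctional j (unitPowTwo k) := by
  have : (2 : ℝ) ^ k + 1 ≤ 2 ^ j := by exact_mod_cast Nat.pow_lt_pow_right (by norm_num) hk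
  simp [prefixFunctional, unitPowTwo]
  linarith

theorem prefixFunctional_unitPowTwo_neg {j k : ℕ} (hk : j ≤ k) :
    prefixFunctional j (unitPowTwo k) < 0 := by
  have : (2 : ℝ) ^ j ≤ 2 ^ k := pow_le_pow_right₀ (by norm_num) hk
  simp [prefixFunctional, unitPowTwo]
  linarith

section Vertices

variable {n j : ℕ}

theorem lowerVertex_mem_exposedPoints (hj : j ≤ n) :
    lowerVertex j ∈ (zonotope fun k : Fin n => unitPowTwo k).exposedPoints ℝ := by
  rw [← sum_range_unitPowTwo, ← sum_filter_val_lt_eq_sum_range hj]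
  refine sum_mem_exposedPoints_zonotope _ (prefixFunctional j) _ (fun k hk => ?_) fun k hk => ?_
  · simp only [mem_filter, mem_univ, true_and] at hk
    exact prefixFunctional_unitPowTwo_pos hk
  · simp only [mem_filter, mem_univ, true_and, not_lt] at hk
    exact prefixFunctional_unitPowTwo_neg hk

theorem upperVertex_mem_exposedPoints (hj : j ≤ n) :
    upperVertex n j ∈ (zonotope fun k : Fin n => unitPowTwo k).exposedPoints ℝ := by
  set s := univ.filter (fun k : Fin n => (k : ℕ) < j)
  have hsum : ∑ k ∈ sᶜ, unitPowTwo k = upperVertex n j := by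
    rw [eq_sub_of_add_eq (sum_compl_add_sum s fun k => unitPowTwo k),
      Fin.sum_univ_eq_sum_range unitPowTwo, sum_filter_val_lt_eq_sum_range hj,
      sum_range_unitPowTwo, sum_range_unitPowTwo]
    ext <;> simp [lowerVertex, upperVertex]
  rw [← hsum]
  refine sum_mem_exposedPoints_zonotope _ (-prefixFunctional j) _ (fun k hk => ?_) fun k hk => ?_
  · simp only [s, mem_compl, mem_filter, mem_univ, true_and, not_lt] at hk
    simpa using prefixFunctional_unitPowTwo_neg hk
  · simp only [s, mem_compl, mem_filter, mem_univ, true_and, not_not] at hk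
    simpa using prefixFunctional_unitPowTwo_pos hk

end Vertices

theorem lowerVertex_injective : Function.Injective lowerVertex := fun i j h => by
  simpa [lowerVertex] using congrArg Prod.fst h

theorem upperVertex_injective (n : ℕ) : Function.Injective (upperVertex n) := fun i j h => by
  simpa [upperVertex] using congrArg Prod.fst h

theorem lowerVertex_ne_upperVertex {n i j : ℕ} (hi : 1 ≤ i) (hj : 1 ≤ j) :
    lowerVertex i ≠ upperVertex n j := by
  intro h
  simp only [lowerVertex, upperVertex, Prod.mk.injEq] at h
  obtain ⟨hx, hy⟩ := h
  have hn : n = i + j := by exact_mod_cast (by linarith : (n : ℝ) = i + j)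
  have hi2 : (2 : ℝ) ≤ 2 ^ i := by simpa using pow_le_pow_right₀ (by norm_num : (1 : ℝ) ≤ 2) hi
  have hj2 : (2 : ℝ) ≤ 2 ^ j := by simpa using pow_le_pow_right₀ (by norm_num : (1 : ℝ) ≤ 2) hj
  -- with `n = i + j` the second coordinates give `(2 ^ i - 1) * (2 ^ j - 1) = 0`
  rw [hn, pow_add] at hy
  nlinarith

theorem no_constant_exact_representation_general (n : ℕ)
    (F : Finset (ℝ × ℝ))
    (hF : convexHull ℝ (F : Set (ℝ × ℝ)) =
      { z : ℝ × ℝ | ∃ t : Fin n → ℝ, (∀ k, 0 ≤ t k ∧ t k ≤ 1) ∧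
        z = ∑ k, t k • (((1 : ℝ), (2 : ℝ) ^ (k : ℕ))) }) :
    2 * n ≤ F.card := by
  classical
  have hZ : zonotope (fun k : Fin n => unitPowTwo k) = convexHull ℝ (F : Set (ℝ × ℝ)) := hF.symm
  have hF_exposed : ∀ x ∈ (zonotope fun k : Fin n => unitPowTwo k).exposedPoints ℝ, x ∈ F :=
    fun x hx => extremePoints_convexHull_subset (hZ ▸ exposedPoints_subset_extremePoints hx)
  have hdisj : Disjoint ((Icc 1 n).image lowerVertex) ((Icc 1 n).image (upperVertex n)) := by
    simp only [disjoint_left, mem_image, mem_Icc]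
    rintro _ ⟨i, ⟨hi, -⟩, rfl⟩ ⟨j, ⟨hj, -⟩, h⟩
    exact lowerVertex_ne_upperVertex hi hj h.symm
  calc 2 * n = ((Icc 1 n).image lowerVertex ∪ (Icc 1 n).image (upperVertex n)).card := by
        rw [card_union_of_disjoint hdisj, card_image_of_injective _ lowerVertex_injective,
          card_image_of_injective _ (upperVertex_injective n), Nat.card_Icc]
        omega
    _ ≤ F.card := by
      refine card_le_card fun x hx => ?_
      simp only [mem_union, mem_image, mem_Icc] at hx
      rcases hx with ⟨j, ⟨-, hj⟩, rfl⟩ | ⟨j, ⟨-, hj⟩, rfl⟩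
      · exact hF_exposed _ (lowerVertex_mem_exposedPoints hj)
      · exact hF_exposed _ (upperVertex_mem_exposedPoints hj)

/-- Formal heart of the claim that no perfect constant pruning strategy exists for
`Lola_𝔹/𝓛𝓐`: any finite set `F` whose convex hull is the zonotope `Z n` generated by
the vectors `(1, 2^k)`, `k < n`, has at least `2·n` elements. -/
theorem no_constant_exact_representation (n : ℕ) (hn : 1 ≤ n)
    (F : Finset (ℝ × ℝ))
    (hF : convexHull ℝ (F : Set (ℝ × ℝ)) =
      { z : ℝ × ℝ | ∃ t : Fin n → ℝ, (∀ k, 0 ≤ t k ∧ t k ≤ 1) ∧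
        z = ∑ k, t k • (((1 : ℝ), (2 : ℝ) ^ (k : ℕ))) }) :
    2 * n ≤ F.card :=
  no_constant_exact_representation_general n F hF
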